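/- arXiv:1804.01841 — 2 statements merged into one kernel-verified Lean document; each statement's English description precedes it below -/
import Mathlib

section
/- Let N be a phylogenetic network on X. Then N is tree-child if and only if for every interior vertex v of N there exists a leaf x_v ∈ X such that v is a vertex-stable ancestor of x_v. -/
/- ------------------------------------------------------------------
Common combinatorial framework for phylogenetic networks, MUL-trees,
un-fold and fold-up operations, following Huber--Moulton--Scornavacca--
Steel and the paper "Three applications of un-fold/fold-up operations
for stable phylogenetic networks".

A `Net` is a rooted directed multigraph: `arcs u v` records the number
of parallel arcs from `u` to `v`.  Directed walks are recorded as lists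
of *arc tokens* `(u, v, i)` (the `i`-th parallel arc from `u` to `v`),
so that parallel arcs give rise to different directed paths.
------------------------------------------------------------------- -/

open Classical

universe u v w

namespace Phylo

/-- A rooted directed multigraph on the vertex type `V`:  `arcs u v` is the
number of parallel arcs from `u` to `v`, `verts` is the vertex set and
`root` the root. -/
structure Net (V : Type u) where
  verts : Set V
  arcs : V → V → ℕ
  root : V

/-- An arc token: `(u, v, i)` stands for the `i`-th parallel arc from `u` to `v`. -/
abbrev Arc (V : Type u) := V × V × ℕ

namespace Net

variable {V : Type u}

/-- The arc token `a` is a genuine arc of `N`. -/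
def okArc (N : Net V) (a : Arc V) : Prop :=
  a.1 ∈ N.verts ∧ a.2.1 ∈ N.verts ∧ a.2.2 < N.arcs a.1 a.2.1

/-- `l` is a directed walk (possibly trivial) starting at the vertex `u`,
recorded as the list of its arc tokens. -/
def WalkFrom (N : Net V) (u : V) (l : List (Arc V)) : Prop :=
  u ∈ N.verts ∧ (∀ a ∈ l, N.okArc a) ∧
    List.Chain' (fun a b : Arc V => a.2.1 = b.1) l ∧
    ∀ a ∈ l.head?, (a : Arc V).1 = u

/-- The end vertex of the walk `l` starting at `u`. -/
def endOf (u : V) (l : List (Arc V)) : V := (l.getLastD (u, u, 0)).2.1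

/-- The list of vertices visited by a walk `l` starting at `u`. -/
def walkVerts (u : V) (l : List (Arc V)) : List V := u :: l.map (fun a => a.2.1)

/-- The inner (non-endpoint) vertices of a walk `l` starting at `u`. -/
def innerVerts (u : V) (l : List (Arc V)) : List V := ((walkVerts u l).dropLast).drop 1

/-- `w` is *below* `u` (there is a directed path from `u` to `w`; every
vertex is below itself).  Equivalently, `u` is an *ancestor* of `w`. -/
def Reaches (N : Net V) (u w : V) : Prop := ∃ l, N.WalkFrom u l ∧ endOf u l = w

/-- The indegree of a vertex (counting parallel arcs). -/
noncomputable def inDeg (N : Net V) (v : V) : ℕ := ∑ᶠ u, N.arcs u v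

/-- The outdegree of a vertex (counting parallel arcs). -/
noncomputable def outDeg (N : Net V) (v : V) : ℕ := ∑ᶠ u, N.arcs v u

/-- A leaf is a vertex of outdegree zero. -/
def IsLeaf (N : Net V) (v : V) : Prop := v ∈ N.verts ∧ N.outDeg v = 0

/-- An interior vertex is a non-leaf vertex. -/
def IsInterior (N : Net V) (v : V) : Prop := v ∈ N.verts ∧ N.outDeg v ≠ 0

/-- A tree vertex is a vertex of indegree at most one. -/
def IsTreeVert (N : Net V) (v : V) : Prop := v ∈ N.verts ∧ N.inDeg v ≤ 1

/-- A hybrid vertex is a vertex of indegree at least two. -/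
def IsHybrid (N : Net V) (v : V) : Prop := v ∈ N.verts ∧ 2 ≤ N.inDeg v

/-- The one-step arc relation. -/
def ArcRel (N : Net V) (u v : V) : Prop := 0 < N.arcs u v

/-- `N` contains no directed cycle. -/
def Acyclic (N : Net V) : Prop := ∀ v, ¬ Relation.TransGen N.ArcRel v v

/-- A rooted connected pseudoDAG: a finite rooted directed (multi)graph with
no directed cycles in which every vertex is reachable from the root. -/
structure IsPseudoDAG (N : Net V) : Prop where
  finite : N.verts.Finite
  rootMem : N.root ∈ N.verts
  arcMem : ∀ u v, N.arcs u v ≠ 0 → u ∈ N.verts ∧ v ∈ N.verts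
  acyclic : N.Acyclic
  connected : ∀ v ∈ N.verts, N.Reaches N.root v

/-- An `X`-network: a rooted connected pseudoDAG whose leaf set is `X`, where
the root has indegree zero, every non-leaf tree vertex has outdegree two,
every hybrid vertex has outdegree one, and every leaf has total degree one. -/
structure IsXNetwork (N : Net V) (X : Set V) extends IsPseudoDAG N : Prop where
  rootInDeg : N.inDeg N.root = 0
  leafSet : ∀ v, N.IsLeaf v ↔ v ∈ X
  treeOutDeg : ∀ v ∈ N.verts, N.inDeg v ≤ 1 → N.outDeg v ≠ 0 → N.outDeg v = 2
  hybridOutDeg : ∀ v ∈ N.verts, 2 ≤ N.inDeg v → N.outDeg v = 1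
  leafInDeg : ∀ v ∈ X, N.inDeg v = 1

/-- No parallel arcs. -/
def NoParallel (N : Net V) : Prop := ∀ u v, N.arcs u v ≤ 1

/-- A phylogenetic network on `X`: an `X`-network without parallel arcs. -/
structure IsPhyloNetwork (N : Net V) (X : Set V) extends IsXNetwork N X : Prop where
  noParallel : N.NoParallel

/-- A phylogenetic tree on `X`: a phylogenetic network with no hybrid vertices. -/
structure IsPhyloTree (N : Net V) (X : Set V) extends IsPhyloNetwork N X : Prop where
  noHybrid : ∀ v, ¬ N.IsHybrid v

/-- A vertex with indegree one and outdegree one (to be suppressed). -/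
def Suppressible (N : Net V) (v : V) : Prop :=
  v ∈ N.verts ∧ N.inDeg v = 1 ∧ N.outDeg v = 1

/-- The graph obtained from `N` by suppressing all vertices of indegree one and
outdegree one: kept vertices are the non-suppressible ones, and the number of
arcs from `u` to `w` is the number of directed paths from `u` to `w` in `N`
all of whose inner vertices are suppressible. -/
noncomputable def suppr (N : Net V) : Net V where
  verts := {v ∈ N.verts | ¬ N.Suppressible v}
  arcs := fun u w =>
    if u ∈ N.verts ∧ ¬ N.Suppressible u ∧ w ∈ N.verts ∧ ¬ N.Suppressible w then
      Set.ncard {l : List (Arc V) | N.WalkFrom u l ∧ l ≠ [] ∧ endOf u l = w ∧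
        ∀ x ∈ innerVerts u l, N.Suppressible x}
    else 0
  root := N.root

/-- `g` realizes an isomorphism of rooted multigraphs from `N` to `N'`. -/
def NetIsoVia {W : Type w} (N : Net V) (N' : Net W) (g : V → W) : Prop :=
  Set.BijOn g N.verts N'.verts ∧
    (∀ u ∈ N.verts, ∀ v ∈ N.verts, N'.arcs (g u) (g v) = N.arcs u v) ∧
    g N.root = N'.root

/-- `w` is a vertex-stable ancestor of the leaf `x`: `w` is an interior vertex
lying on every directed path from the root to `x`. -/
def IsVSAncestor (N : Net V) (w x : V) : Prop :=
  N.IsInterior w ∧ N.IsLeaf x ∧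
    ∀ l, N.WalkFrom N.root l → endOf N.root l = x → w ∈ walkVerts N.root l

/-- `N` is tree-child: every interior vertex has a child that is a tree vertex. -/
def TreeChild (N : Net V) : Prop :=
  ∀ v, N.IsInterior v → ∃ u, 0 < N.arcs v u ∧ N.IsTreeVert u

/-- `N` is compressed: no arc has both its tail and its head hybrid. -/
def Compressed (N : Net V) : Prop :=
  ∀ u v, 0 < N.arcs u v → ¬(N.IsHybrid u ∧ N.IsHybrid v)

/-- `N` is reticulation-visible: every hybrid vertex is a vertex-stable
ancestor of some leaf. -/
def RetVisible (N : Net V) (X : Set V) : Prop :=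
  ∀ h, N.IsHybrid h → ∃ x ∈ X, N.IsVSAncestor h x

/-- The set of arc tokens used by a walk. -/
def arcsOf (l : List (Arc V)) : Set (Arc V) := {a | a ∈ l}

/-- The union of the directed paths `p₁` and `p₂` contains a subgraph that is
a reticulation cycle of `N`, i.e. the union of two arc-disjoint non-trivial
directed paths of `N` with the same start vertex and the same end vertex. -/
def ContainsRetCycle (N : Net V) (p₁ p₂ : List (Arc V)) : Prop :=
  ∃ (q₁ q₂ : List (Arc V)) (s e : V),
    N.WalkFrom s q₁ ∧ N.WalkFrom s q₂ ∧ q₁ ≠ [] ∧ q₂ ≠ [] ∧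
    endOf s q₁ = e ∧ endOf s q₂ = e ∧
    Disjoint (arcsOf q₁) (arcsOf q₂) ∧
    arcsOf q₁ ∪ arcsOf q₂ ⊆ arcsOf p₁ ∪ arcsOf p₂

/-- The set of vertices having a descendant in `Y`. -/
def keepSet (N : Net V) (Y : Set V) : Set V := {v ∈ N.verts | ∃ y ∈ Y, N.Reaches v y}

/-- The result of the leaf-removing operations applied to all leaves outside
`Y`: restrict to the vertices having a descendant in `Y` and suppress all
resulting vertices of indegree one and outdegree one. -/
noncomputable def restrictNet (N : Net V) (Y : Set V) : Net V :=
  Net.suppr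
    { verts := N.keepSet Y
      arcs := fun u w => if u ∈ N.keepSet Y ∧ w ∈ N.keepSet Y then N.arcs u w else 0
      root := N.root }

end Net

/-- A labelled rooted directed multigraph: the data of a MUL-tree on the
label set: `lab x` is the set of leaves labelled `x`. -/
structure LNet (V : Type u) (L : Type v) extends Net V where
  lab : L → Set V

namespace LNet

variable {V : Type u} {L : Type v}

/-- `M` is a MUL-tree on `X`: a rooted tree whose root has indegree `0`, with
no vertex of indegree one and outdegree one, in which every leaf carries
exactly one label from `X` and every label of `X` occurs. -/
structure IsMulTree (M : LNet V L) (X : Set L) : Prop where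
  pseudo : M.toNet.IsPseudoDAG
  rootInDeg : M.toNet.inDeg M.root = 0
  inDegOne : ∀ v ∈ M.verts, v ≠ M.root → M.toNet.inDeg v = 1
  noSupp : ∀ v, ¬ M.toNet.Suppressible v
  labLeaf : ∀ x ∈ X, ∀ l ∈ M.lab x, M.toNet.IsLeaf l
  labNonempty : ∀ x ∈ X, (M.lab x).Nonempty
  labCover : ∀ l, M.toNet.IsLeaf l → ∃! x, x ∈ X ∧ l ∈ M.lab x
  labOff : ∀ x, x ∉ X → M.lab x = ∅

/-- The set of vertices below `v`. -/
def belowSet (M : LNet V L) (v : V) : Set V := {w | M.toNet.Reaches v w}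

/-- The subMUL-tree `M_v` of `M` rooted at the vertex `v` (delete the incoming
arc of `v` and restrict the labelling). -/
noncomputable def subAt (M : LNet V L) (v : V) : LNet V L where
  verts := M.belowSet v
  arcs := fun u w => if u ∈ M.belowSet v ∧ w ∈ M.belowSet v then M.arcs u w else 0
  root := v
  lab := fun x => M.lab x ∩ M.belowSet v

/-- `η` realizes an isomorphism of MUL-trees (same label type). -/
def MulIsoVia {V' : Type w} (M : LNet V L) (M' : LNet V' L) (η : V → V') : Prop :=
  Set.BijOn η M.verts M'.verts ∧
    (∀ u ∈ M.verts, ∀ w ∈ M.verts, M'.arcs (η u) (η w) = M.arcs u w) ∧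
    η M.root = M'.root ∧
    ∀ x : L, η '' (M.lab x ∩ M.verts) = M'.lab x ∩ M'.verts

/-- Two labelled trees (on the same label type) are isomorphic. -/
def MulIso {V' : Type w} (M : LNet V L) (M' : LNet V' L) : Prop := ∃ η, MulIsoVia M M' η

/-- `η` realizes an isomorphism of MUL-trees on `X` modulo the label
translation `e`. -/
def MulIsoRelVia {V' : Type w} {L' : Type*} (M : LNet V L) (X : Set L)
    (M' : LNet V' L') (e : L → L') (η : V → V') : Prop :=
  Set.BijOn η M.verts M'.verts ∧
    (∀ u ∈ M.verts, ∀ w ∈ M.verts, M'.arcs (η u) (η w) = M.arcs u w) ∧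
    η M.root = M'.root ∧
    ∀ x ∈ X, η '' (M.lab x ∩ M.verts) = M'.lab (e x) ∩ M'.verts

/-- The equivalence relation `∼`: `u ∼ w` iff `u = w` or the subMUL-trees
`M_u` and `M_w` are isomorphic. -/
def Sim (M : LNet V L) (u w : V) : Prop := u = w ∨ MulIso (M.subAt u) (M.subAt w)

/-- The `∼`-equivalence class of `w`; the map `eqClass M : V(M) → V(M)/∼`
plays the role of the projection `p_M` onto the quotient. -/
def eqClass (M : LNet V L) (w : V) : Set V := {u ∈ M.verts | M.Sim u w}

/-- The quotient `V(M)/∼`, realized as the set of `∼`-equivalence classes. -/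
def classSet (M : LNet V L) : Set (Set V) := M.eqClass '' M.verts

/-- `c` is a `∼`-equivalence class of `M`. -/
def IsClassOf (M : LNet V L) (c : Set V) : Prop := ∃ w ∈ M.verts, c = M.eqClass w

/-- The class `c` gets a hybrid vertex above it in the fold-up of `M`:
some (equivalently, any) member of `c` has its parent in a strictly smaller
`∼`-class. -/
def ClassHyb (M : LNet V L) (c : Set V) : Prop :=
  ∃ w ∈ M.verts, c = M.eqClass w ∧ ∃ u, 0 < M.arcs u w ∧ (M.eqClass u).ncard < c.ncard

/-- `d` is the class of a parent of a member of `c`. -/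
def IsParentClassOf (M : LNet V L) (d c : Set V) : Prop :=
  ∃ u w, 0 < M.arcs u w ∧ d = M.eqClass u ∧ c = M.eqClass w

/-- The number of children inside `c` of a member of `d`. -/
noncomputable def childMult (M : LNet V L) (d c : Set V) : ℕ :=
  sSup {n : ℕ | ∃ u ∈ d, n = ∑ᶠ w ∈ c, M.arcs u w}

/-- The fold-up `F(M)` of the MUL-tree `M`: the `X`-network obtained by
repeatedly identifying all maximal inextendible subMUL-trees, subdividing
the incoming arcs of their roots and identifying the subdivision vertices.
Concretely, its tree vertices are the `∼`-classes of `M`, there is a hybrid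
vertex above each class whose members have parents in a strictly smaller
class, and arcs are induced by the arcs of `M`. -/
noncomputable def foldUp (M : LNet V L) : Net (Set V ⊕ Set V) where
  verts := (Sum.inl '' {c | M.IsClassOf c}) ∪
    (Sum.inr '' {c | M.IsClassOf c ∧ M.ClassHyb c})
  arcs := fun a b =>
    match a, b with
    | Sum.inl d, Sum.inl c =>
        if M.IsClassOf d ∧ M.IsClassOf c ∧ ¬ M.ClassHyb c ∧ M.IsParentClassOf d c
        then 1 else 0
    | Sum.inl d, Sum.inr c =>
        if M.IsClassOf d ∧ M.IsClassOf c ∧ M.ClassHyb c ∧ M.IsParentClassOf d c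
        then M.childMult d c else 0
    | Sum.inr c, Sum.inl c' =>
        if c' = c ∧ M.IsClassOf c ∧ M.ClassHyb c then 1 else 0
    | Sum.inr _, Sum.inr _ => 0
  root := Sum.inl (M.eqClass M.root)

/-- The `∼`-class of the leaves labelled `x`. -/
def labClass (M : LNet V L) (x : L) : Set V := {w ∈ M.verts | ∃ l ∈ M.lab x, M.Sim w l}

/-- The leaf set of the fold-up of `M`, identified with `X`. -/
def foldX (M : LNet V L) (X : Set L) : Set (Set V ⊕ Set V) :=
  (fun x => Sum.inl (M.labClass x)) '' X

/-- A MUL-tree is sound if its fold-up is a phylogenetic network. -/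
def IsSound (M : LNet V L) (X : Set L) : Prop :=
  M.IsMulTree X ∧ Net.IsPhyloNetwork M.foldUp (M.foldX X)

/-- An `X`-set of `M`: a set of leaves containing exactly one leaf labelled
`x` for every `x ∈ X`. -/
def IsXSet (M : LNet V L) (X : Set L) (C : Set V) : Prop :=
  (∀ l ∈ C, M.toNet.IsLeaf l) ∧ ∀ x ∈ X, ∃! l, l ∈ C ∧ l ∈ M.lab x

/-- `r` is the last common ancestor of the elements of `C`. -/
def IsLca (M : LNet V L) (r : V) (C : Set V) : Prop :=
  r ∈ M.verts ∧ (∀ c ∈ C, M.toNet.Reaches r c) ∧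
    ∀ r' ∈ M.verts, (∀ c ∈ C, M.toNet.Reaches r' c) → M.toNet.Reaches r' r

/-- The last common ancestor `r_C` of the elements of `C`. -/
noncomputable def lcaOf [Nonempty V] (M : LNet V L) (C : Set V) : V :=
  Classical.epsilon fun r => M.IsLca r C

/-- The vertex set of `M_C⁺`: all vertices on a directed path from
`lca(C)` to a leaf in `C`. -/
def subPlusVerts [Nonempty V] (M : LNet V L) (C : Set V) : Set V :=
  {v | M.toNet.Reaches (M.lcaOf C) v ∧ ∃ c ∈ C, M.toNet.Reaches v c}

/-- The tree `M_C⁺` spanned by the leaves in `C`; the canonical injection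
`ξ_C⁺ : V(M_C⁺) → V(M)` is the set-inclusion `subPlusVerts M C ⊆ V`, so that
the map `ξ̄_C⁺ = p_M ∘ ξ_C⁺` is realized by `eqClass M` restricted to
`subPlusVerts M C`. -/
noncomputable def subPlus [Nonempty V] (M : LNet V L) (C : Set V) : Net V where
  verts := M.subPlusVerts C
  arcs := fun u w => if u ∈ M.subPlusVerts C ∧ w ∈ M.subPlusVerts C then M.arcs u w else 0
  root := M.lcaOf C

/-- The phylogenetic tree `M_C` induced by the `X`-set `C`: suppress all
vertices of indegree one and outdegree one in `M_C⁺`. -/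
noncomputable def mC [Nonempty V] (M : LNet V L) (C : Set V) : Net V := (M.subPlus C).suppr

/-- The set `V(M)^C`: the vertex `r_C` together with all vertices `v` such
that no vertex below `v` is `∼`-equivalent to `r_C`. -/
def vmc [Nonempty V] (M : LNet V L) (C : Set V) : Set V :=
  insert (M.lcaOf C) {v ∈ M.verts | ∀ u, M.toNet.Reaches v u → ¬ M.Sim u (M.lcaOf C)}

/-- Vertices of `M` having a descendant leaf labelled by an element of `Y`. -/
def keepSet (M : LNet V L) (Y : Set L) : Set V :=
  {v ∈ M.verts | ∃ w, M.toNet.Reaches v w ∧ ∃ y ∈ Y, w ∈ M.lab y}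

/-- The MUL-tree `M_Y` obtained from `M` by the leaf-removing operation:
remove all leaves labelled outside `Y` (together with everything having no
leaf labelled in `Y` below it) and suppress all resulting vertices of
indegree one and outdegree one. -/
noncomputable def restrictMul (M : LNet V L) (Y : Set L) : LNet V L where
  toNet := Net.suppr
    { verts := M.keepSet Y
      arcs := fun u w => if u ∈ M.keepSet Y ∧ w ∈ M.keepSet Y then M.arcs u w else 0
      root := M.root }
  lab := fun y => if y ∈ Y then M.lab y else ∅

end LNet

namespace Net

variable {V : Type u}

/-- The vertex set of the un-fold `U(N)` of `N`: the set `π⁻(N)` of directed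
paths of `N` starting at the root and ending in a tree vertex.  (The
bijection `Ψ_N : π⁻(N) → V(U(N))` is thereby realized as the identity.) -/
def unfoldVerts (N : Net V) : Set (List (Arc V)) :=
  {p | N.WalkFrom N.root p ∧ N.IsTreeVert (endOf N.root p)}

/-- The un-fold `U(N)` of `N`, a MUL-tree on `X`: vertices are the directed
paths from the root ending in tree vertices, arcs correspond to extending
such a path by a single arc followed by a (possibly empty) run of hybrid
vertices, and the leaves labelled `x ∈ X` are the paths ending in `x`. -/
noncomputable def unfoldNet (N : Net V) (X : Set V) : LNet (List (Arc V)) V where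
  verts := unfoldVerts N
  arcs := fun p q =>
    if p ∈ unfoldVerts N ∧ q ∈ unfoldVerts N ∧
        ∃ r, r ≠ [] ∧ q = p ++ r ∧ ∀ a ∈ r.dropLast, N.IsHybrid (a : Arc V).2.1
    then 1 else 0
  root := []
  lab := fun x => if x ∈ X then {p ∈ unfoldVerts N | endOf N.root p = x} else ∅

end Net

/-- `N` is a stable phylogenetic network on `X`: `N` is a phylogenetic
network isomorphic to the fold-up of its un-fold, via an isomorphism fixing
`X` pointwise (i.e. sending each leaf `x` to the leaf of `F(U(N))`
corresponding to `x`). -/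
def IsStable {V : Type u} (N : Net V) (X : Set V) : Prop :=
  Net.IsPhyloNetwork N X ∧
    ∃ g, Net.NetIsoVia N (Net.unfoldNet N X).foldUp g ∧
      ∀ x ∈ X, g x = Sum.inl ((Net.unfoldNet N X).labClass x)

/-- `T` is endorsed by the MUL-tree `M` via the `X`-set `C`, the isomorphism
`T ≅ M_C` being realized by `σ` (which sends each `x ∈ X` to the unique leaf
of `C` labelled `x`). -/
def EndorsedVia {V : Type u} {W : Type w} [Nonempty W] (T : Net V) (X : Set V)
    (M : LNet W V) (C : Set W) (σ : V → W) : Prop :=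
  M.IsXSet X C ∧ Net.NetIsoVia T (M.mC C) σ ∧ ∀ x ∈ X, σ x ∈ C ∧ σ x ∈ M.lab x

/-- `T` is endorsed by the MUL-tree `M` via the `X`-set `C`. -/
def Endorsed {V : Type u} {W : Type w} [Nonempty W] (T : Net V) (X : Set V)
    (M : LNet W V) (C : Set W) : Prop :=
  ∃ σ, EndorsedVia T X M C σ

/-- `N'` is a subgraph of `N` with leaf set `X` which is (an isomorphic copy,
via the identity on `X`, of) a subdivision of `T`: suppressing all vertices
of indegree one and outdegree one in `N'` yields a tree isomorphic to `T`
via an isomorphism `g` fixing `X` pointwise. -/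
def IsDisplayWitness {V : Type u} (N : Net V) (X : Set V) (T : Net V)
    (N' : Net V) (g : V → V) : Prop :=
  N'.verts ⊆ N.verts ∧ (∀ u v, N'.arcs u v ≤ N.arcs u v) ∧
    N'.root ∈ N'.verts ∧ (∀ v ∈ N'.verts, N'.Reaches N'.root v) ∧
    (∀ v, N'.IsLeaf v ↔ v ∈ X) ∧
    Net.NetIsoVia T N'.suppr g ∧ ∀ x ∈ X, g x = x

/-- The phylogenetic tree `T` is displayed by `N`. -/
def Displays {V : Type u} (N : Net V) (X : Set V) (T : Net V) : Prop :=
  ∃ N' g, IsDisplayWitness N X T N' g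

/-- The phylogenetic tree `T` is strongly displayed by `N`: it is displayed
via a subdivision whose root is the root of `N`. -/
def StronglyDisplays {V : Type u} (N : Net V) (X : Set V) (T : Net V) : Prop :=
  ∃ N' g, IsDisplayWitness N X T N' g ∧ N'.root = N.root

/-- `G` is a rooted tree. -/
structure IsRootedTree {V : Type u} (G : Net V) : Prop where
  pseudo : G.IsPseudoDAG
  rootInDeg : G.inDeg G.root = 0
  inDegOne : ∀ v ∈ G.verts, v ≠ G.root → G.inDeg v = 1

/-- `T'` is a subdivision of `T` (with the identity on `X`): `T'` is a rooted
tree which, after suppressing all vertices of indegree one and outdegree one,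
is isomorphic to `T` via an isomorphism fixing `X` pointwise. -/
def IsSubdivisionOf {V : Type u} (T' T : Net V) (X : Set V) : Prop :=
  IsRootedTree T' ∧ ∃ g, Net.NetIsoVia T T'.suppr g ∧ ∀ x ∈ X, g x = x

/-- `T` is a base tree for `N`: `N` can be obtained from `T` by subdividing
some arcs of `T`, adding arcs between the subdivision vertices without
creating parallel arcs or directed cycles, and suppressing all subdivision
vertices still of indegree one and outdegree one. -/
def IsBaseTreeFor {V : Type u} (T : Net V) (X : Set V) (N : Net V) : Prop :=
  ∃ T' G : Net V,
    IsSubdivisionOf T' T X ∧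
    G.verts = T'.verts ∧ G.root = T'.root ∧
    (∀ u v, T'.arcs u v ≤ G.arcs u v) ∧
    (∀ u v, T'.arcs u v ≠ G.arcs u v → T'.Suppressible u ∧ T'.Suppressible v) ∧
    G.NoParallel ∧ G.Acyclic ∧
    ∃ h, Net.NetIsoVia G.suppr N h ∧ ∀ x ∈ X, h x = x

end Phylo
namespace Phylo
namespace Net

variable {V : Type u} {N : Net V}

private lemma eq_nil_or_append (l : List (Arc V)) : l = [] ∨ ∃ t c, l = t ++ [c] := by
  rcases l.eq_nil_or_concat with h | ⟨t, c, h⟩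
  · exact Or.inl h
  · exact Or.inr ⟨t, c, by simpa using h⟩

lemma endOf_nil (u : V) : endOf u ([] : List (Arc V)) = u := rfl

lemma endOf_concat (u : V) (l : List (Arc V)) (a : Arc V) :
    endOf u (l ++ [a]) = a.2.1 := by
  simp [endOf, List.getLastD_concat]

lemma endOf_append (u : V) (l1 l2 : List (Arc V)) :
    endOf u (l1 ++ l2) = endOf (endOf u l1) l2 := by
  rcases eq_nil_or_append l2 with rfl | ⟨t, c, rfl⟩
  · simp [endOf_nil]
  · rw [← List.append_assoc, endOf_concat, endOf_concat]

lemma walk_split {u : V} {l1 l2 : List (Arc V)} (h : N.WalkFrom u (l1 ++ l2)) :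
    N.WalkFrom u l1 ∧ N.WalkFrom (endOf u l1) l2 := by
  obtain ⟨hu, hok, hch, hhd⟩ := h
  rw [List.Chain', List.isChain_append] at hch
  obtain ⟨hc1, hc2, hbd⟩ := hch
  constructor
  · refine ⟨hu, fun a ha => hok a (List.mem_append_left _ ha), hc1, ?_⟩
    intro a ha
    cases l1 with
    | nil => simp at ha
    | cons b t =>
      simp only [List.head?_cons, Option.mem_def, Option.some.injEq] at ha
      exact ha ▸ hhd b (by simp)
  · rcases eq_nil_or_append l1 with rfl | ⟨t, c, rfl⟩
    · exact ⟨hu, fun a ha => hok a (by simpa using ha), hc2, fun a ha => hhd a (by simpa using ha)⟩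
    · have hcl : c ∈ t ++ [c] := by simp
      have hokc := hok c (List.mem_append_left _ hcl)
      refine ⟨by rw [endOf_concat]; exact hokc.2.1, fun a ha => hok a (List.mem_append_right _ ha),
        hc2, ?_⟩
      intro a ha
      rw [endOf_concat]
      exact (hbd c (by simp [List.getLast?_concat]) a ha).symm

lemma walk_append {u : V} {l1 l2 : List (Arc V)} (h1 : N.WalkFrom u l1)
    (h2 : N.WalkFrom (endOf u l1) l2) : N.WalkFrom u (l1 ++ l2) := by
  obtain ⟨hu, hok1, hc1, hh1⟩ := h1
  obtain ⟨hu2, hok2, hc2, hh2⟩ := h2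
  refine ⟨hu, ?_, ?_, ?_⟩
  · intro a ha
    rcases List.mem_append.1 ha with h | h
    · exact hok1 a h
    · exact hok2 a h
  · rw [List.Chain', List.isChain_append]
    refine ⟨hc1, hc2, ?_⟩
    intro x hx y hy
    have hyy := hh2 y hy
    rcases eq_nil_or_append l1 with rfl | ⟨t, c, rfl⟩
    · simp at hx
    · have : x = c := by
        rw [List.getLast?_concat] at hx
        exact (show c = x by simpa using hx).symm
      subst this
      rw [endOf_concat] at hyy
      exact hyy.symm
  · intro a ha
    cases l1 with
    | nil =>
      exact hh2 a (by simpa using ha)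
    | cons b t =>
      have h' : some b = some a := ha
      injection h' with h''
      exact h'' ▸ hh1 b (by simp)

lemma walk_single {u w : V} (hu : u ∈ N.verts) (hw : w ∈ N.verts)
    (harc : 0 < N.arcs u w) : N.WalkFrom u [(u, w, 0)] ∧ endOf u [(u, w, 0)] = w := by
  refine ⟨⟨hu, ?_, ?_, ?_⟩, ?_⟩
  · intro a ha
    have : a = (u, w, 0) := by simpa using ha
    subst this
    exact ⟨hu, hw, harc⟩
  · exact List.isChain_singleton _
  · intro a ha
    have h' : some ((u, w, 0) : Arc V) = some a := ha
    injection h' with h''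
    simp [← h'']
  · show endOf u ([] ++ [(u, w, 0)]) = w
    rw [endOf_concat]

lemma mem_walkVerts_append_left {u v : V} {l1 l2 : List (Arc V)}
    (h : v ∈ walkVerts u l1) : v ∈ walkVerts u (l1 ++ l2) := by
  simp only [walkVerts, List.map_append, List.mem_cons, List.mem_append] at h ⊢
  tauto

lemma endOf_mem_walkVerts (u : V) (l : List (Arc V)) : endOf u l ∈ walkVerts u l := by
  rcases eq_nil_or_append l with rfl | ⟨t, c, rfl⟩
  · simp [endOf_nil, walkVerts]
  · rw [endOf_concat]
    simp [walkVerts]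

lemma exists_prefix_of_mem_walkVerts {u v : V} {l : List (Arc V)}
    (h : v ∈ walkVerts u l) : ∃ l1 l2, l = l1 ++ l2 ∧ endOf u l1 = v := by
  simp only [walkVerts, List.mem_cons, List.mem_map] at h
  rcases h with rfl | ⟨a, hal, hav⟩
  · exact ⟨[], l, rfl, rfl⟩
  · obtain ⟨s, t, rfl⟩ := List.append_of_mem hal
    exact ⟨s ++ [a], t, by simp, by rw [endOf_concat]; exact hav⟩

lemma walk_transGen {u : V} : ∀ {l : List (Arc V)}, N.WalkFrom u l → l ≠ [] →
    Relation.TransGen N.ArcRel u (endOf u l) := by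
  intro l
  induction l generalizing u with
  | nil => intro _ h; exact absurd rfl h
  | cons a t ih =>
    intro h _
    have ha1 : a.1 = u := h.2.2.2 a (by simp)
    have hok : N.okArc a := h.2.1 a (by simp)
    have harc : N.ArcRel u a.2.1 := by
      rw [ArcRel, ← ha1]
      exact Nat.lt_of_le_of_lt (Nat.zero_le _) hok.2.2
    have hsplit := walk_split (l1 := [a]) (l2 := t) (by simpa using h)
    have he1 : endOf u [a] = a.2.1 := by
      show endOf u ([] ++ [a]) = a.2.1
      rw [endOf_concat]
    have hend : endOf u (a :: t) = endOf a.2.1 t := by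
      have := endOf_append u [a] t
      simpa [he1] using this
    rcases eq_or_ne t [] with rfl | hne
    · rw [hend]
      exact Relation.TransGen.single harc
    · rw [hend]
      exact Relation.TransGen.head harc (ih (he1 ▸ hsplit.2) hne)

lemma inDeg_eq_sum (hfin : N.verts.Finite)
    (hmem : ∀ u v, N.arcs u v ≠ 0 → u ∈ N.verts ∧ v ∈ N.verts) (v : V) :
    N.inDeg v = ∑ u ∈ hfin.toFinset, N.arcs u v := by
  apply finsum_eq_finset_sum_of_support_subset
  intro u hu
  simp only [Function.mem_support] at hu
  simp only [Finset.coe_sort_coe, Set.Finite.coe_toFinset]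
  exact (hmem u v hu).1

lemma le_inDeg (hfin : N.verts.Finite)
    (hmem : ∀ u v, N.arcs u v ≠ 0 → u ∈ N.verts ∧ v ∈ N.verts) {p v : V}
    (h : 0 < N.arcs p v) : N.arcs p v ≤ N.inDeg v := by
  rw [inDeg_eq_sum hfin hmem]
  exact Finset.single_le_sum (f := fun u => N.arcs u v) (fun i _ => Nat.zero_le _)
    (hfin.mem_toFinset.2 (hmem p v h.ne').1)

lemma parent_eq (hfin : N.verts.Finite)
    (hmem : ∀ u v, N.arcs u v ≠ 0 → u ∈ N.verts ∧ v ∈ N.verts) {p q v : V}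
    (h1 : N.inDeg v ≤ 1) (hp : 0 < N.arcs p v) (hq : 0 < N.arcs q v) : p = q := by
  by_contra hne
  have hsub : ({p, q} : Finset V) ⊆ hfin.toFinset := by
    intro i hi
    rw [Set.Finite.mem_toFinset]
    rcases Finset.mem_insert.1 hi with h' | h'
    · exact h' ▸ (hmem p v hp.ne').1
    · exact (Finset.mem_singleton.1 h') ▸ (hmem q v hq.ne').1
  have : N.arcs p v + N.arcs q v ≤ N.inDeg v := by
    rw [inDeg_eq_sum hfin hmem]
    calc N.arcs p v + N.arcs q v
        = ∑ u ∈ ({p, q} : Finset V), N.arcs u v := (Finset.sum_pair (f := fun u => N.arcs u v) hne).symm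
      _ ≤ ∑ u ∈ hfin.toFinset, N.arcs u v := Finset.sum_le_sum_of_subset hsub
  omega

lemma wf_below (hfin : N.verts.Finite) (hacy : N.Acyclic) :
    WellFounded (fun a b : ↥N.verts => Relation.TransGen N.ArcRel (b : V) (a : V)) := by
  haveI := hfin.to_subtype
  haveI : IsTrans ↥N.verts (fun a b : ↥N.verts => Relation.TransGen N.ArcRel (b : V) (a : V)) :=
    ⟨fun _ _ _ hab hbc => hbc.trans hab⟩
  haveI : IsIrrefl ↥N.verts (fun a b : ↥N.verts => Relation.TransGen N.ArcRel (b : V) (a : V)) :=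
    ⟨fun a h => hacy (a : V) h⟩
  exact Finite.wellFounded_of_trans_of_irrefl _

lemma wf_above (hfin : N.verts.Finite) (hacy : N.Acyclic) :
    WellFounded (fun a b : ↥N.verts => Relation.TransGen N.ArcRel (a : V) (b : V)) := by
  haveI := hfin.to_subtype
  haveI : IsTrans ↥N.verts (fun a b : ↥N.verts => Relation.TransGen N.ArcRel (a : V) (b : V)) :=
    ⟨fun _ _ _ hab hbc => hab.trans hbc⟩
  haveI : IsIrrefl ↥N.verts (fun a b : ↥N.verts => Relation.TransGen N.ArcRel (a : V) (b : V)) :=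
    ⟨fun a h => hacy (a : V) h⟩
  exact Finite.wellFounded_of_trans_of_irrefl _

lemma key_step {X : Set V} (hN : N.IsPhyloNetwork X) {v u : V} (harc : 0 < N.arcs v u)
    (hdeg : N.inDeg u = 1) :
    ∀ l, N.WalkFrom N.root l → endOf N.root l = u → v ∈ walkVerts N.root l := by
  intro l hw he
  have hur : u ≠ N.root := by
    intro h
    rw [h, hN.rootInDeg] at hdeg
    omega
  rcases eq_nil_or_append l with rfl | ⟨t, c, rfl⟩
  · rw [endOf_nil] at he
    exact absurd he.symm hur
  · rw [endOf_concat] at he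
    obtain ⟨hw1, hw2⟩ := walk_split hw
    have hc1 : c.1 = endOf N.root t := hw2.2.2.2 c rfl
    have hokc : N.okArc c := hw.2.1 c (by simp)
    have hcpos : 0 < N.arcs c.1 u := by
      rw [← he]
      exact Nat.lt_of_le_of_lt (Nat.zero_le _) hokc.2.2
    have hcv : c.1 = v := parent_eq hN.finite hN.arcMem hdeg.le hcpos harc
    have hv : v ∈ walkVerts N.root t := by
      rw [← hcv, hc1]
      exact endOf_mem_walkVerts _ _
    exact mem_walkVerts_append_left hv

end Net
end Phylo
namespace Phylo

/-- **Lemma 3, first part.**  Let `N` be a phylogenetic network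
on `X`.  Then `N` is tree-child if and only if for every interior vertex `v`
of `N` there exists a leaf `x_v ∈ X` such that `v` is a vertex-stable
ancestor of `x_v`. -/
theorem tree_child_iff_vsa {V : Type u} (X : Set V) (N : Net V)
    (hX : 3 ≤ X.ncard) (hN : Net.IsPhyloNetwork N X) :
    N.TreeChild ↔ ∀ v, N.IsInterior v → ∃ x ∈ X, N.IsVSAncestor v x := by
  constructor
  · -- tree-child implies every interior vertex is a vertex-stable ancestor
    intro htc v0 hv0
    have main : ∀ a : ↥N.verts, N.IsInterior (a : V) → ∃ x ∈ X, N.IsVSAncestor (a : V) x := by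
      intro a
      refine (Net.wf_below hN.finite hN.acyclic).induction
        (C := fun a => N.IsInterior (a : V) → ∃ x ∈ X, N.IsVSAncestor (a : V) x) a ?_
      intro b IH hbint
      obtain ⟨u, hu_arc, hu_tree⟩ := htc (b : V) hbint
      have huv : u ∈ N.verts := hu_tree.1
      have hdeg : N.inDeg u = 1 :=
        le_antisymm hu_tree.2 (le_trans hu_arc (Net.le_inDeg hN.finite hN.arcMem hu_arc))
      by_cases hlf : N.outDeg u = 0
      · exact ⟨u, (hN.leafSet u).1 ⟨huv, hlf⟩,
          hbint, ⟨huv, hlf⟩, Net.key_step hN hu_arc hdeg⟩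
      · obtain ⟨x, hxX, hVSA⟩ :=
          IH ⟨u, huv⟩ (Relation.TransGen.single hu_arc) ⟨huv, hlf⟩
        refine ⟨x, hxX, hbint, hVSA.2.1, ?_⟩
        intro l hw he
        have humem := hVSA.2.2 l hw he
        obtain ⟨l1, l2, rfl, hend⟩ := Net.exists_prefix_of_mem_walkVerts humem
        have hw1 := (Net.walk_split hw).1
        exact Net.mem_walkVerts_append_left (Net.key_step hN hu_arc hdeg l1 hw1 hend)
    exact main ⟨v0, hv0.1⟩ hv0
  · -- the stability condition implies tree-child
    intro hvsa v hint
    by_contra hno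
    push_neg at hno
    have hch : ∀ u, 0 < N.arcs v u → 2 ≤ N.inDeg u := by
      intro u hu
      have hum := (hN.arcMem v u hu.ne').2
      have h' := hno u hu
      rw [Net.IsTreeVert] at h'
      by_contra hlt
      exact h' ⟨hum, by omega⟩
    have Q : ∀ z : ↥N.verts, Relation.TransGen N.ArcRel v (z : V) →
        ∃ l, N.WalkFrom N.root l ∧ Net.endOf N.root l = (z : V) ∧
          v ∉ Net.walkVerts N.root l := by
      intro z
      refine (Net.wf_above hN.finite hN.acyclic).induction
        (C := fun z => Relation.TransGen N.ArcRel v (z : V) →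
          ∃ l, N.WalkFrom N.root l ∧ Net.endOf N.root l = (z : V) ∧
            v ∉ Net.walkVerts N.root l) z ?_
      intro z IH hbelow
      have hzv : (z : V) ≠ v := by
        intro h
        rw [h] at hbelow
        exact hN.acyclic v hbelow
      obtain ⟨p0, _, hp0a⟩ := (Relation.TransGen.tail'_iff).1 hbelow
      by_cases hcase : ∀ p, 0 < N.arcs p (z : V) → p = v
      · have hpv := hcase p0 hp0a
        have h2 := hch (z : V) (hpv ▸ hp0a)
        have heq : N.inDeg (z : V) = N.arcs v (z : V) :=
          finsum_eq_single (fun p => N.arcs p (z : V)) v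
            (fun p hp => by
              by_contra h'
              exact hp (hcase p (Nat.pos_of_ne_zero h')))
        have hnp := hN.noParallel v (z : V)
        omega
      · push_neg at hcase
        obtain ⟨p, hpa, hpv⟩ := hcase
        have hpmem : p ∈ N.verts := (hN.arcMem _ _ hpa.ne').1
        have hl : ∃ l, N.WalkFrom N.root l ∧ Net.endOf N.root l = p ∧
            v ∉ Net.walkVerts N.root l := by
          by_cases hstrict : Relation.TransGen N.ArcRel v p
          · exact IH ⟨p, hpmem⟩ (Relation.TransGen.single hpa) hstrict
          · by_contra h'
            push_neg at h'
            obtain ⟨l0, hw0, he0⟩ := hN.connected p hpmem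
            have hv0 := h' l0 hw0 he0
            obtain ⟨l1, l2, rfl, hend⟩ := Net.exists_prefix_of_mem_walkVerts hv0
            have hw2 := (Net.walk_split hw0).2
            rw [hend] at hw2
            rw [Net.endOf_append, hend] at he0
            rcases eq_or_ne l2 [] with rfl | hne
            · rw [Net.endOf_nil] at he0
              exact hpv he0.symm
            · exact hstrict (he0 ▸ Net.walk_transGen hw2 hne)
        obtain ⟨l, hw, he, hnv⟩ := hl
        refine ⟨l ++ [(p, (z : V), 0)], ?_, ?_, ?_⟩
        · refine Net.walk_append hw ?_
          rw [he]
          exact (Net.walk_single hpmem z.2 hpa).1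
        · rw [Net.endOf_concat]
        · intro hmem
          simp only [Net.walkVerts, List.map_append, List.map_cons, List.map_nil,
            List.mem_cons, List.mem_append] at hmem
          rcases hmem with h | h | h
          · exact hnv (by simp [Net.walkVerts, h])
          · exact hnv (by simp [Net.walkVerts, h])
          · rcases h with h | h
            · exact hzv h.symm
            · simp at h
    obtain ⟨x, hxX, hVSA⟩ := hvsa v hint
    obtain ⟨_, hxleaf, hstab⟩ := hVSA
    have hxm : x ∈ N.verts := hxleaf.1
    obtain ⟨l0, hw0, he0⟩ := hN.connected x hxm
    have hv0 := hstab l0 hw0 he0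
    obtain ⟨l1, l2, rfl, hend⟩ := Net.exists_prefix_of_mem_walkVerts hv0
    have hw2 := (Net.walk_split hw0).2
    rw [hend] at hw2
    rw [Net.endOf_append, hend] at he0
    rcases eq_or_ne l2 [] with rfl | hne
    · rw [Net.endOf_nil] at he0
      exact hint.2 (he0 ▸ hxleaf.2)
    · have htg : Relation.TransGen N.ArcRel v x := he0 ▸ Net.walk_transGen hw2 hne
      obtain ⟨l, hw, he, hnv⟩ := Q ⟨x, hxm⟩ htg
      exact hnv (hstab l hw he)

end Phylo
end

section
/- Let N be a phylogenetic network on X. Then N is tree-child if and only if N is compressed and for every tree vertex v ∈ V°(N) (i.e., every interior tree vertex of N) there exists a leaf x_v ∈ X such that v is a vertex-stable ancestor of x_v. -/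
/- ------------------------------------------------------------------
Common combinatorial framework for phylogenetic networks, MUL-trees,
un-fold and fold-up operations, following Huber--Moulton--Scornavacca--
Steel and the paper "Three applications of un-fold/fold-up operations
for stable phylogenetic networks".

A `Net` is a rooted directed multigraph: `arcs u v` records the number
of parallel arcs from `u` to `v`.  Directed walks are recorded as lists
of *arc tokens* `(u, v, i)` (the `i`-th parallel arc from `u` to `v`),
so that parallel arcs give rise to different directed paths.
------------------------------------------------------------------- -/

open Classical

universe u v w

namespace Phylo

/- ------------------- auxiliary lemmas for the proof ------------------- -/

namespace Aux

open Net

variable {V : Type u}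

lemma le_finsum' {f : V → ℕ} (hf : (Function.support f).Finite) (p : V) :
    f p ≤ ∑ᶠ v, f v :=
  single_le_finsum p hf (fun _ => Nat.zero_le _)

lemma pair_le_finsum {f : V → ℕ} (hf : (Function.support f).Finite) {p q : V}
    (hpq : p ≠ q) (hp : f p ≠ 0) (hq : f q ≠ 0) : f p + f q ≤ ∑ᶠ v, f v := by
  rw [finsum_eq_sum f hf]
  have hpmem : p ∈ hf.toFinset := by simp [Function.mem_support, hp]
  have hqmem : q ∈ hf.toFinset.erase p :=
    Finset.mem_erase.2 ⟨hpq.symm, by simp [Function.mem_support, hq]⟩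
  calc f p + f q ≤ f p + ∑ v ∈ hf.toFinset.erase p, f v := by
        exact Nat.add_le_add_left
          (Finset.single_le_sum (fun i _ => Nat.zero_le (f i)) hqmem) _
    _ = ∑ v ∈ hf.toFinset, f v := Finset.add_sum_erase _ f hpmem

lemma in_support_fin {N : Net V} (hN : N.IsPseudoDAG) (u : V) :
    (Function.support fun p => N.arcs p u).Finite :=
  hN.finite.subset (fun p hp => (hN.arcMem p u hp).1)

lemma out_support_fin {N : Net V} (hN : N.IsPseudoDAG) (u : V) :
    (Function.support fun w => N.arcs u w).Finite :=
  hN.finite.subset (fun p hp => (hN.arcMem u p hp).2)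

lemma arcs_le_inDeg {N : Net V} (hN : N.IsPseudoDAG) (p u : V) :
    N.arcs p u ≤ N.inDeg u :=
  le_finsum' (in_support_fin hN u) p

lemma arcs_le_outDeg {N : Net V} (hN : N.IsPseudoDAG) (u w : V) :
    N.arcs u w ≤ N.outDeg u :=
  le_finsum' (out_support_fin hN u) w

lemma endOf_nil (u : V) : endOf u ([] : List (Arc V)) = u := rfl

lemma endOf_concat (u : V) (l : List (Arc V)) (a : Arc V) :
    endOf u (l ++ [a]) = a.2.1 := by
  simp [endOf, List.getLastD_concat]

lemma walkVerts_concat (u : V) (l : List (Arc V)) (a : Arc V) :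
    walkVerts u (l ++ [a]) = walkVerts u l ++ [a.2.1] := by
  simp [walkVerts]

lemma endOf_mem_walkVerts (u : V) (l : List (Arc V)) :
    endOf u l ∈ walkVerts u l := by
  rcases List.eq_nil_or_concat' l with rfl | ⟨l', a, rfl⟩
  · simp [endOf, walkVerts]
  · rw [endOf_concat, walkVerts_concat]
    simp

lemma endOf_mem_verts {N : Net V} {u : V} {l : List (Arc V)}
    (h : N.WalkFrom u l) : endOf u l ∈ N.verts := by
  rcases List.eq_nil_or_concat' l with rfl | ⟨l', a, rfl⟩
  · exact h.1
  · rw [endOf_concat]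
    exact (h.2.1 a (by simp)).2.1

/-- Extending a walk by one extra arc. -/
lemma walk_concat {N : Net V} {l : List (Arc V)} {u p w : V}
    (h : N.WalkFrom u l) (he : endOf u l = p) (hw : w ∈ N.verts)
    (hi : 0 < N.arcs p w) : N.WalkFrom u (l ++ [(p, w, 0)]) := by
  obtain ⟨hu, hok, hch, hhd⟩ := h
  refine ⟨hu, ?_, ?_, ?_⟩
  · intro a ha
    rcases List.mem_append.1 ha with ha | ha
    · exact hok a ha
    · simp only [List.mem_singleton] at ha
      subst ha
      have hp : p ∈ N.verts := he ▸ endOf_mem_verts ⟨hu, hok, hch, hhd⟩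
      exact ⟨hp, hw, hi⟩
  · refine List.isChain_append.2 ⟨hch, List.isChain_singleton _, ?_⟩
    intro x hx y hy
    simp only [List.head?_cons, Option.mem_def, Option.some.injEq] at hy
    subst hy
    have : l.getLastD (u, u, 0) = x := by
      rw [List.getLastD_eq_getLast?, Option.mem_def.1 hx]
      rfl
    show x.2.1 = p
    rw [← he, endOf, this]
  · intro a ha
    rcases List.eq_nil_or_concat' l with rfl | ⟨l', b, rfl⟩
    · simp only [List.nil_append, List.head?_cons, Option.mem_def, Option.some.injEq] at ha
      subst ha
      simpa [endOf_nil] using he.symm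
    · apply hhd
      rcases l' with _ | ⟨c, l''⟩
      · simpa using ha
      · simpa using ha

/-- Removing the last arc of a walk. -/
lemma walk_init {N : Net V} {l : List (Arc V)} {a : Arc V} {u : V}
    (h : N.WalkFrom u (l ++ [a])) : N.WalkFrom u l ∧ endOf u l = a.1 := by
  obtain ⟨hu, hok, hch, hhd⟩ := h
  replace hch := List.isChain_append.1 hch
  have hW : N.WalkFrom u l := by
    refine ⟨hu, fun b hb => hok b (List.mem_append.2 (Or.inl hb)), hch.1, ?_⟩
    intro b hb
    apply hhd
    rw [List.head?_append]
    rcases l with _ | ⟨c, l'⟩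
    · simp at hb
    · simpa using hb
  refine ⟨hW, ?_⟩
  rcases List.eq_nil_or_concat' l with rfl | ⟨l', b, rfl⟩
  · have := hhd a (by simp)
    simpa [endOf_nil] using this.symm
  · have := hch.2.2 b (by simp [List.getLast?_concat]) a (by simp)
    rw [endOf_concat]
    exact this

/-- `w` lies on every root-to-`y` directed walk. -/
def Dom (N : Net V) (w y : V) : Prop :=
  ∀ l, N.WalkFrom N.root l → endOf N.root l = y → w ∈ walkVerts N.root l

lemma dom_self {N : Net V} (w : V) : Dom N w w := by
  intro l hl he
  rw [← he]
  exact endOf_mem_walkVerts _ _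

/-- If `u` is a tree vertex of indegree one with parent `v`, then everything
dominating `v` dominates `u`. -/
lemma dom_step {N : Net V} {X : Set V} (hN : N.IsXNetwork X) {v u w : V}
    (hvu : 0 < N.arcs v u) (hdeg : N.inDeg u = 1) (hdom : Dom N w v) :
    Dom N w u := by
  intro l hl he
  rcases List.eq_nil_or_concat' l with rfl | ⟨l', a, rfl⟩
  · exfalso
    rw [endOf_nil] at he
    rw [← he, hN.rootInDeg] at hdeg
    exact absurd hdeg (by norm_num)
  · obtain ⟨hl', he'⟩ := walk_init hl
    have ha : N.okArc a := hl.2.1 a (by simp)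
    have hau : N.arcs a.1 u ≠ 0 := by
      have h1 := ha.2.2
      rw [endOf_concat] at he
      rw [he] at h1
      omega
    have hpar : a.1 = v := by
      by_contra hne
      have hle : N.arcs a.1 u + N.arcs v u ≤ N.inDeg u := by
        rw [Net.inDeg]
        exact pair_le_finsum (in_support_fin hN.toIsPseudoDAG u) hne hau hvu.ne'
      omega
    have hmem := hdom l' hl' (he'.trans hpar)
    rw [walkVerts_concat]
    exact List.mem_append.2 (Or.inl hmem)

/-- In a tree-child network every interior vertex dominates some leaf,
hereditarily. -/
lemma exists_stable_leaf {N : Net V} {X : Set V} (hN : N.IsPhyloNetwork X)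
    (htc : N.TreeChild) (v : V) (hv : N.IsInterior v) :
    ∃ x, N.IsLeaf x ∧ ∀ w, Dom N w v → Dom N w x := by
  have hfin := hN.finite
  haveI : Finite N.verts := hfin.to_subtype
  let r : N.verts → N.verts → Prop := fun a b => Relation.TransGen N.ArcRel b.1 a.1
  haveI : IsTrans N.verts r := ⟨fun _ _ _ hab hbc => hbc.trans hab⟩
  haveI : IsIrrefl N.verts r := ⟨fun a h => hN.acyclic a.1 h⟩
  have hwf : WellFounded r := Finite.wellFounded_of_trans_of_irrefl r
  suffices H : ∀ a : N.verts, N.IsInterior a.1 →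
      ∃ x, N.IsLeaf x ∧ ∀ w, Dom N w a.1 → Dom N w x by
    exact H ⟨v, hv.1⟩ hv
  intro a
  induction a using hwf.induction with
  | _ a IH =>
    intro hva
    obtain ⟨u, hu_arc, huV, hu_deg⟩ := htc a.1 hva
    have hdeg1 : N.inDeg u = 1 := by
      have h1 : N.arcs a.1 u ≤ N.inDeg u := arcs_le_inDeg hN.toIsPseudoDAG a.1 u
      omega
    by_cases hout : N.outDeg u = 0
    · exact ⟨u, ⟨huV, hout⟩, fun w hw => dom_step hN.toIsXNetwork hu_arc hdeg1 hw⟩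
    · have hr : r ⟨u, huV⟩ a := Relation.TransGen.single hu_arc
      obtain ⟨x, hx, hstep⟩ := IH ⟨u, huV⟩ hr ⟨huV, hout⟩
      exact ⟨x, hx, fun w hw => hstep w (dom_step hN.toIsXNetwork hu_arc hdeg1 hw)⟩

end Aux


/-- **Lemma 3, second part.**  Let `N` be a phylogenetic
network on `X`.  Then `N` is tree-child if and only if `N` is compressed
and for every interior tree vertex `v` of `N` there exists a leaf `x_v ∈ X`
such that `v` is a vertex-stable ancestor of `x_v`. -/
theorem tree_child_iff_compressed_vsa {V : Type u} (X : Set V) (N : Net V)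
    (hX : 3 ≤ X.ncard) (hN : Net.IsPhyloNetwork N X) :
    N.TreeChild ↔
      (N.Compressed ∧
        ∀ v, N.IsInterior v → N.inDeg v ≤ 1 → ∃ x ∈ X, N.IsVSAncestor v x) := by
  constructor
  · intro htc
    constructor
    · rintro p q hpq ⟨hp, hq⟩
      have hple : N.arcs p q ≤ N.outDeg p := Aux.arcs_le_outDeg hN.toIsPseudoDAG p q
      have hpint : N.IsInterior p := ⟨hp.1, by omega⟩
      obtain ⟨c, hc, hcV, hcdeg⟩ := htc p hpint
      have hout1 : N.outDeg p = 1 := hN.hybridOutDeg p hp.1 hp.2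
      by_cases hcq : c = q
      · subst hcq
        have := hq.2
        omega
      · have h2 : N.arcs p c + N.arcs p q ≤ N.outDeg p := by
          rw [Net.outDeg]
          exact Aux.pair_le_finsum (Aux.out_support_fin hN.toIsPseudoDAG p) hcq hc.ne' hpq.ne'
        omega
    · intro v hv _
      obtain ⟨x, hx, hstep⟩ := Aux.exists_stable_leaf hN htc v hv
      exact ⟨x, (hN.leafSet x).1 hx, hv, hx, hstep v (Aux.dom_self v)⟩
  · rintro ⟨hcomp, hstab⟩ v hv
    by_contra hno
    push_neg at hno
    by_cases hdeg : N.inDeg v ≤ 1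
    · obtain ⟨x, hxX, hint, hleaf, hdom⟩ := hstab v hv hdeg
      haveI : Finite N.verts := hN.finite.to_subtype
      let r : N.verts → N.verts → Prop := fun a b => Relation.TransGen N.ArcRel a.1 b.1
      haveI : IsTrans N.verts r := ⟨fun _ _ _ hab hbc => hab.trans hbc⟩
      haveI : IsIrrefl N.verts r := ⟨fun a h => hN.acyclic a.1 h⟩
      have hwf : WellFounded r := Finite.wellFounded_of_trans_of_irrefl r
      let D : Set N.verts := {a | a.1 ≠ v ∧ Aux.Dom N v a.1}
      have hxV : x ∈ N.verts := hleaf.1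
      have hxD : (⟨x, hxV⟩ : N.verts) ∈ D := ⟨fun h => hv.2 (h ▸ hleaf.2), hdom⟩
      obtain ⟨u, huD, hmin⟩ := hwf.has_min D ⟨_, hxD⟩
      have hpar : ∀ p, N.arcs p u.1 ≠ 0 → p = v := by
        intro p hp
        by_contra hne
        have hpV : p ∈ N.verts := (hN.arcMem p u.1 hp).1
        by_cases hpd : Aux.Dom N v p
        · exact hmin ⟨p, hpV⟩ ⟨hne, hpd⟩
            (Relation.TransGen.single (Nat.pos_of_ne_zero hp))
        · simp only [Aux.Dom, not_forall] at hpd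
          obtain ⟨l, hl, hle, hnv⟩ := hpd
          have hw2 := Aux.walk_concat hl hle u.2 (Nat.pos_of_ne_zero hp)
          have hmem := huD.2 _ hw2 (Aux.endOf_concat _ _ _)
          rw [Aux.walkVerts_concat] at hmem
          rcases List.mem_append.1 hmem with h | h
          · exact hnv h
          · simp only [List.mem_singleton] at h
            exact huD.1 h.symm
      obtain ⟨l, hl, hle⟩ := hN.connected u.1 u.2
      have hvl := huD.2 l hl hle
      rcases List.eq_nil_or_concat' l with rfl | ⟨l', a, rfl⟩
      · simp only [Net.walkVerts, List.map_nil, List.mem_singleton] at hvl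
        rw [Aux.endOf_nil] at hle
        exact huD.1 (hvl.trans hle).symm
      · have ha : N.okArc a := hl.2.1 a (by simp)
        have hau : N.arcs a.1 u.1 ≠ 0 := by
          have h3 := ha.2.2
          rw [Aux.endOf_concat] at hle
          rw [hle] at h3
          omega
        have havu : a.1 = v := hpar _ hau
        have harc : 0 < N.arcs v u.1 := Nat.pos_of_ne_zero (havu ▸ hau)
        have hdegu : N.inDeg u.1 ≤ 1 := by
          have h1 : N.inDeg u.1 = N.arcs v u.1 := by
            rw [Net.inDeg]
            exact finsum_eq_single _ v
              (fun p hp => by by_contra h0; exact hp (hpar p h0))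
          rw [h1]
          exact hN.noParallel v u.1
        exact hno u.1 harc ⟨u.2, hdegu⟩
    · push_neg at hdeg
      have hex : ∃ w, N.arcs v w ≠ 0 := by
        by_contra h
        push_neg at h
        have h0 : N.outDeg v = 0 := by
          rw [Net.outDeg, finsum_eq_single _ v (fun p _ => h p)]
          exact h v
        exact hv.2 h0
      obtain ⟨w, hw⟩ := hex
      have hwV : w ∈ N.verts := (hN.arcMem v w hw).2
      have hwhyb : 2 ≤ N.inDeg w := by
        have h2 := hno w (Nat.pos_of_ne_zero hw)
        by_contra h3
        push_neg at h3
        exact h2 ⟨hwV, by omega⟩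
      exact hcomp v w (Nat.pos_of_ne_zero hw) ⟨⟨hv.1, hdeg⟩, ⟨hwV, hwhyb⟩⟩

end Phylo
end
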